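/- In the chase under conceptual dependencies, every fact over a relationship predicate r ∈ R_R contains either only non-fresh constants, or only fresh constants, or exactly one distinct non-fresh constant (possibly occurring in several positions); no other combination occurs. -/

import Mathlib

/-- Constants: `Sum.inl` = non-fresh constants (dom), `Sum.inr` = fresh constants (Γ_f). -/
abbrev Const := ℕ ⊕ ℕ

def nonFresh (c : Const) : Prop := ∃ n, c = Sum.inl n
def isFresh (c : Const) : Prop := ∃ n, c = Sum.inr n

/-- An atom over an argument type `α` (for facts, `α = Const`; for query bodies, terms). -/
structure GAtom (α : Type) where
  rel : String
  args : List α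
deriving DecidableEq

abbrev Atom := GAtom Const
/-- A (possibly infinite) database instance is a set of facts. -/
abbrev DB := Set Atom

def mapAtom (f : Const → Const) (a : Atom) : Atom := ⟨a.rel, a.args.map f⟩

/-- `μ` is a homomorphism from the set of atoms `D1` to `D2` (as a map on constants). -/
def isHom (μ : Const → Const) (D1 D2 : DB) : Prop := ∀ a ∈ D1, mapAtom μ a ∈ D2

/-- `μ` fixes all non-fresh constants. -/
def homFix (μ : Const → Const) : Prop := ∀ n : ℕ, μ (Sum.inl n) = Sum.inl n

/-- `c` occurs as an argument of some fact of `D`. -/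
def occursC (c : Const) (D : DB) : Prop := ∃ a ∈ D, c ∈ a.args

/-- Projection of a tuple on a sequence of (0-based) attribute positions. -/
def projT (l : List Const) (X : List ℕ) : List (Option Const) := X.map (l[·]?)

/-- An inclusion dependency `r1[X] ⊆ r2[Y]`. -/
structure IncDep where
  r1 : String
  X : List ℕ
  r2 : String
  Y : List ℕ

/-- A key dependency `key(r) = K`. -/
structure KeyDep where
  r : String
  K : List ℕ

structure Deps where
  ids : Set IncDep
  kds : Set KeyDep

def satID (D : DB) (σ : IncDep) : Prop :=
  ∀ a ∈ D, a.rel = σ.r1 →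
    ∃ b ∈ D, b.rel = σ.r2 ∧ projT a.args σ.X = projT b.args σ.Y

def satKD (D : DB) (κ : KeyDep) : Prop :=
  ∀ a ∈ D, ∀ b ∈ D, a.rel = κ.r → b.rel = κ.r →
    projT a.args κ.K = projT b.args κ.K → a = b

def satDeps (D : DB) (Sg : Deps) : Prop :=
  (∀ σ ∈ Sg.ids, satID D σ) ∧ (∀ κ ∈ Sg.kds, satKD D κ)

/-- One application of the ID chase rule (`ar` gives the arity of each relation):
a fact of `r1` with no matching fact of `r2` generates a new fact of `r2`, with
distinct fresh constants, not occurring in the current instance, at all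
unconstrained positions. -/
def IDStep (ar : String → ℕ) (Sg : Deps) (S S' : DB) : Prop :=
  ∃ σ ∈ Sg.ids, ∃ a ∈ S, a.rel = σ.r1 ∧
    (¬ ∃ b ∈ S, b.rel = σ.r2 ∧ projT a.args σ.X = projT b.args σ.Y) ∧
    ∃ b : Atom, b.rel = σ.r2 ∧ b.args.length = ar σ.r2 ∧
      projT a.args σ.X = projT b.args σ.Y ∧
      (∀ i, i < b.args.length → i ∉ σ.Y →
        ∃ c, b.args[i]? = some c ∧ isFresh c ∧ ¬ occursC c S) ∧
      (∀ i j, i < b.args.length → j < b.args.length → i ≠ j → i ∉ σ.Y → j ∉ σ.Y →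
        b.args[i]? ≠ b.args[j]?) ∧
      S' = S ∪ {b}

/-- One application of the KD chase rule: two distinct facts of `r` agreeing on the
key are merged via a map `μ` that never changes a non-fresh constant. -/
def KDStep (Sg : Deps) (S S' : DB) : Prop :=
  ∃ κ ∈ Sg.kds, ∃ a ∈ S, ∃ b ∈ S, a ≠ b ∧ a.rel = κ.r ∧ b.rel = κ.r ∧
    projT a.args κ.K = projT b.args κ.K ∧
    ∃ μ : Const → Const,
      (∀ c, ¬ isFresh c → μ c = c) ∧
      mapAtom μ a = mapAtom μ b ∧
      (∀ c, μ c ≠ c → ∃ i : ℕ,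
        (a.args[i]? = some c ∧ b.args[i]? = some (μ c)) ∨
        (b.args[i]? = some c ∧ a.args[i]? = some (μ c))) ∧
      S' = (mapAtom μ) '' S

def ChaseStep (ar : String → ℕ) (Sg : Deps) (S S' : DB) : Prop :=
  IDStep ar Sg S S' ∨ KDStep Sg S S'

/-- The limit of a chase sequence: the eventually persistent facts. -/
def chaseLimit (seq : ℕ → DB) : DB := {a | ∃ N, ∀ n, N ≤ n → a ∈ seq n}

/-- `Ch` is the chase of `D` under `Sg` (and it exists): a fair exhaustive sequence of
chase-rule applications starting from `D`, whose limit satisfies all dependencies. -/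
def IsChase (ar : String → ℕ) (Sg : Deps) (D Ch : DB) : Prop :=
  ∃ seq : ℕ → DB, seq 0 = D ∧
    (∀ n, ChaseStep ar Sg (seq n) (seq (n + 1)) ∨ seq (n + 1) = seq n) ∧
    Ch = chaseLimit seq ∧ satDeps Ch Sg

/-- Signature arising from an EER schema: unary entity predicates `RE`,
relationship predicates `RR` of arity ≥ 2, with arity function `ar`. -/
structure EERSig where
  RE : Set String
  RR : Set String
  ar : String → ℕ

def isPermList (n : ℕ) (Y : List ℕ) : Prop := Y.Perm (List.range n)

/-- `Sg` is a set of conceptual dependencies over the signature `G`. -/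
def CDshaped (G : EERSig) (Sg : Deps) : Prop :=
  (∀ r ∈ G.RE, G.ar r = 1) ∧ (∀ r ∈ G.RR, 2 ≤ G.ar r) ∧
  (∀ r, ¬ (r ∈ G.RE ∧ r ∈ G.RR)) ∧
  (∀ σ ∈ Sg.ids,
    (σ.r1 ∈ G.RE ∧ σ.r2 ∈ G.RE ∧ σ.X = [0] ∧ σ.Y = [0]) ∨
    (σ.r1 ∈ G.RE ∧ σ.r2 ∈ G.RR ∧ σ.X = [0] ∧ ∃ i, i < G.ar σ.r2 ∧ σ.Y = [i]) ∨
    (σ.r1 ∈ G.RR ∧ σ.r2 ∈ G.RE ∧ (∃ i, i < G.ar σ.r1 ∧ σ.X = [i]) ∧ σ.Y = [0]) ∨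
    (σ.r1 ∈ G.RR ∧ σ.r2 ∈ G.RR ∧ G.ar σ.r1 = G.ar σ.r2 ∧
      σ.X = List.range (G.ar σ.r1) ∧ isPermList (G.ar σ.r1) σ.Y)) ∧
  (∀ κ ∈ Sg.kds, κ.r ∈ G.RR ∧ ∃ i, i < G.ar κ.r ∧ κ.K = [i])

/-!
Every fact with a fresh constant consists of an anchor together with the members of one block:
fresh constants invented together by a single ID step (and copied by permutation IDs), which never
occur as non-anchors apart from their whole block. This is recorded by an assignment `block`
sending a fresh constant to the argument set of its block; a set of constants is anchored when all
its elements but at most one are fresh and assigned to it. A non-fresh constant is never a block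
member, so an anchored fact carries at most one non-fresh constant.

An ID step starts a new block or copies an old one. A KD step merges two facts `a` and `b` sharing
a key value `k`. If `a` consists of non-fresh constants, the merge moves only members of the block
of `b`, which become non-fresh. Otherwise all constants of `a` and `b` but at most one, `α`, are
members of the block of `a` or of `b` (else `k` would be a member of both blocks, which then
coincide); the merge maps both blocks onto one anchored at the image of `α`, and moves no member of
any other block except possibly `α`.
-/

lemma not_isFresh_iff {c : Const} : ¬ isFresh c ↔ nonFresh c := by
  rcases c with n | n <;> simp [isFresh, nonFresh]

lemma not_nonFresh_iff {c : Const} : ¬ nonFresh c ↔ isFresh c := by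
  rw [← not_isFresh_iff, not_not]

def argSet (t : Atom) : Set Const := {c | c ∈ t.args}

@[simp]
lemma mem_argSet {t : Atom} {c : Const} : c ∈ argSet t ↔ c ∈ t.args := Iff.rfl

lemma argSet_mapAtom (μ : Const → Const) (t : Atom) : argSet (mapAtom μ t) = μ '' argSet t := by
  ext c
  simp [mapAtom]

def IsBlockMember (block : Const → Set Const) (s : Set Const) (z : Const) : Prop :=
  isFresh z ∧ block z = s

def IsAnchored (block : Const → Set Const) (s : Set Const) : Prop :=
  (∀ c ∈ s, nonFresh c) ∨ {z ∈ s | ¬ IsBlockMember block s z}.Subsingleton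

namespace IsAnchored

variable {block block' : Const → Set Const} {s : Set Const}

lemma of_subset {o : Set Const} (ho : o.Subsingleton)
    (h : ∀ z ∈ s, ¬ IsBlockMember block s z → z ∈ o) : IsAnchored block s :=
  Or.inr (ho.anti fun z hz => h z hz.1 hz.2)

lemma congr (h : IsAnchored block s) (heq : ∀ z ∈ s, block' z = block z) :
    IsAnchored block' s := by
  refine h.imp id fun hsub => hsub.anti ?_
  rintro z ⟨hz, hnm⟩
  exact ⟨hz, fun ⟨hf, hb⟩ => hnm ⟨hf, (heq z hz).trans hb⟩⟩

lemma image {μ : Const → Const} (hfix : ∀ c, ¬ isFresh c → μ c = c) (h : IsAnchored block s)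
    (hmem : ∀ z ∈ s, IsBlockMember block s z → IsBlockMember block' (μ '' s) (μ z)) :
    IsAnchored block' (μ '' s) := by
  rcases h with hnf | hsub
  · left
    rintro _ ⟨c, hc, rfl⟩
    rw [hfix c (not_isFresh_iff.mpr (hnf c hc))]
    exact hnf c hc
  · right
    refine (hsub.image μ).anti ?_
    rintro _ ⟨⟨z, hz, rfl⟩, hnm⟩
    exact ⟨z, ⟨hz, fun hm => hnm (hmem z hz hm)⟩, rfl⟩

lemma isBlockMember (h : IsAnchored block s) {u z : Const} (hu : u ∈ s)
    (hun : ¬ IsBlockMember block s u) (hz : z ∈ s) (hzf : isFresh z) (hne : z ≠ u) :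
    IsBlockMember block s z := by
  rcases h with hnf | hsub
  · exact absurd hzf (not_isFresh_iff.mpr (hnf z hz))
  · by_contra hzm
    exact hne (hsub ⟨hz, hzm⟩ ⟨hu, hun⟩)

lemma trichotomy {t : Atom} (h : IsAnchored block (argSet t)) :
    (∀ c ∈ t.args, nonFresh c) ∨ (∀ c ∈ t.args, isFresh c) ∨
      (∃ c : Const, nonFresh c ∧ c ∈ t.args ∧ ∀ x ∈ t.args, isFresh x ∨ x = c) := by
  rcases h with hnf | hsub
  · exact Or.inl hnf
  right
  by_cases hex : ∃ c ∈ t.args, nonFresh c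
  · obtain ⟨c, hc, hcnf⟩ := hex
    refine Or.inr ⟨c, hcnf, hc, fun x hx => or_iff_not_imp_left.mpr fun hxf => ?_⟩
    exact hsub ⟨hx, fun hm => hxf hm.1⟩ ⟨hc, fun hm => not_isFresh_iff.mpr hcnf hm.1⟩
  · push Not at hex
    exact Or.inl fun c hc => not_nonFresh_iff.mp (hex c hc)

end IsAnchored

def ChaseInvariant (ar : String → ℕ) (S : DB) : Prop :=
  (∀ t ∈ S, t.args.length = ar t.rel) ∧
    ∃ block : Const → Set Const, ∀ t ∈ S, IsAnchored block (argSet t)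

lemma CDshaped.ids_shape {G : EERSig} {Sg : Deps} (hCD : CDshaped G Sg) {σ : IncDep}
    (hσ : σ ∈ Sg.ids) :
    (∃ i, σ.Y = [i]) ∨
      (G.ar σ.r1 = G.ar σ.r2 ∧ σ.X = List.range (G.ar σ.r1) ∧
        σ.Y.Perm (List.range (G.ar σ.r1))) := by
  rcases hCD.2.2.2.1 σ hσ with
    ⟨-, -, -, hY⟩ | ⟨-, -, -, i, -, hY⟩ | ⟨-, -, -, hY⟩ | ⟨-, -, har, hX, hY⟩
  · exact Or.inl ⟨0, hY⟩
  · exact Or.inl ⟨i, hY⟩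
  · exact Or.inl ⟨0, hY⟩
  · exact Or.inr ⟨har, hX, hY⟩

lemma mem_iff_some_mem_projT {l : List Const} {X : List ℕ} (hX : ∀ j, j ∈ X ↔ j < l.length)
    {x : Const} : x ∈ l ↔ some x ∈ projT l X := by
  rw [List.mem_iff_getElem?, projT, List.mem_map]
  constructor
  · rintro ⟨j, hj⟩
    exact ⟨j, (hX j).mpr (List.getElem?_eq_some_iff.mp hj).1, hj⟩
  · rintro ⟨j, -, hj⟩
    exact ⟨j, hj⟩

lemma argSet_eq_of_projT_eq {a b : Atom} {n : ℕ} {Y : List ℕ} (ha : a.args.length = n)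
    (hb : b.args.length = n) (hY : Y.Perm (List.range n))
    (h : projT a.args (List.range n) = projT b.args Y) : argSet a = argSet b := by
  ext x
  rw [mem_argSet, mem_argSet, mem_iff_some_mem_projT (X := List.range n) (by simp [ha]), h,
    ← mem_iff_some_mem_projT (by simp [hY.mem_iff, hb])]

lemma exists_isAnchored_union_singleton {S : DB} {block : Const → Set Const}
    (hS : ∀ t ∈ S, IsAnchored block (argSet t)) {b : Atom} {i : ℕ}
    (hfresh : ∀ j, j < b.args.length → j ≠ i →
      ∃ c, b.args[j]? = some c ∧ isFresh c ∧ ¬ occursC c S) :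
    ∃ block' : Const → Set Const, ∀ t ∈ S ∪ {b}, IsAnchored block' (argSet t) := by
  classical
  refine ⟨fun z => if occursC z S then block z else argSet b, ?_⟩
  rintro t (ht | rfl)
  · exact (hS t ht).congr fun z hz => if_pos ⟨t, ht, hz⟩
  · refine IsAnchored.of_subset (o := {z | t.args[i]? = some z}) ?_ fun z hz hnm => ?_
    · intro x hx y hy
      exact Option.some_injective _ (hx.symm.trans hy)
    obtain ⟨j, hj⟩ := List.mem_iff_getElem?.mp (mem_argSet.mp hz)
    obtain rfl | hji := eq_or_ne j i
    · exact hj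
    · obtain ⟨c, hc, hcf, hocc⟩ := hfresh j (List.getElem?_eq_some_iff.mp hj).1 hji
      obtain rfl : c = z := Option.some_injective _ (hc.symm.trans hj)
      exact absurd ⟨hcf, if_neg hocc⟩ hnm

lemma ChaseInvariant.idStep {G : EERSig} {Sg : Deps} {S S' : DB} (hCD : CDshaped G Sg)
    (hS : ChaseInvariant G.ar S) (hstep : IDStep G.ar Sg S S') : ChaseInvariant G.ar S' := by
  obtain ⟨σ, hσ, a, ha, harel, -, b, hbrel, hblen, hproj, hfresh, -, rfl⟩ := hstep
  obtain ⟨hlen, block, hblock⟩ := hS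
  refine ⟨?_, ?_⟩
  · rintro t (ht | rfl)
    · exact hlen t ht
    · rw [hbrel]
      exact hblen
  rcases hCD.ids_shape hσ with ⟨i, hY⟩ | ⟨har, hX, hY⟩
  · exact exists_isAnchored_union_singleton (i := i) hblock fun j hj hji =>
      hfresh j hj (by simp [hY, hji])
  · have hab : argSet a = argSet b := by
      rw [hX] at hproj
      exact argSet_eq_of_projT_eq (by rw [hlen a ha, harel]) (by rw [hblen, har]) hY hproj
    refine ⟨block, ?_⟩
    rintro t (ht | rfl)
    · exact hblock t ht
    · exact hab ▸ hblock a ha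

lemma exists_forall_ne_isBlockMember {block : Const → Set Const} {A B : Set Const}
    (hA : {z ∈ A | ¬ IsBlockMember block A z}.Subsingleton)
    (hB : {z ∈ B | ¬ IsBlockMember block B z}.Subsingleton) {k : Const} (hkA : k ∈ A)
    (hkB : k ∈ B) :
    ∃ α, ∀ z ∈ A ∪ B, z ≠ α → IsBlockMember block A z ∨ IsBlockMember block B z := by
  set Z := {z ∈ A ∪ B | ¬ IsBlockMember block A z ∧ ¬ IsBlockMember block B z}
  have hcross : ∀ x ∈ Z, ∀ y ∈ Z, x ∈ A → y ∈ B → x = y := by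
    rintro x ⟨-, hxA, hxB⟩ y ⟨-, hyA, hyB⟩ hx hy
    by_cases hk : IsBlockMember block A k ∧ IsBlockMember block B k
    · obtain rfl : A = B := hk.1.2.symm.trans hk.2.2
      exact hA ⟨hx, hxA⟩ ⟨hy, hyA⟩
    rcases not_and_or.mp hk with hkA' | hkB'
    · obtain rfl : x = k := hA ⟨hx, hxA⟩ ⟨hkA, hkA'⟩
      exact hB ⟨hkB, hxB⟩ ⟨hy, hyB⟩
    · obtain rfl : y = k := hB ⟨hy, hyB⟩ ⟨hkB, hkB'⟩
      exact hA ⟨hx, hxA⟩ ⟨hkA, hyA⟩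
  have hZ : Z.Subsingleton := by
    intro x hx y hy
    rcases hx.1 with hxA | hxB <;> rcases hy.1 with hyA | hyB
    · exact hA ⟨hxA, hx.2.1⟩ ⟨hyA, hy.2.1⟩
    · exact hcross x hx y hy hxA hyB
    · exact (hcross y hy x hx hyA hxB).symm
    · exact hB ⟨hxB, hx.2.2⟩ ⟨hyB, hy.2.2⟩
  obtain ⟨α, hα⟩ : ∃ α, Z ⊆ {α} := by
    rcases hZ.eq_empty_or_singleton with h | ⟨α, h⟩
    exacts [⟨k, h ▸ Set.empty_subset _⟩, ⟨α, h.le⟩]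
  refine ⟨α, fun z hz hne => ?_⟩
  by_contra hcon
  exact hne (hα ⟨hz, not_or.mp hcon⟩)

/-- What a KD step merging two facts with argument sets `A` and `B` guarantees of its map `μ`. -/
structure IsMerge (μ : Const → Const) (A B : Set Const) : Prop where
  map_of_not_isFresh : ∀ c, ¬ isFresh c → μ c = c
  image_eq : μ '' A = μ '' B
  changed : ∀ c, μ c ≠ c → isFresh c ∧ (c ∈ A ∧ μ c ∈ B ∨ c ∈ B ∧ μ c ∈ A)
  map_map : ∀ c, μ (μ c) = μ c

namespace IsMerge

variable {μ : Const → Const} {A B : Set Const} {block : Const → Set Const}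

lemma symm (hμ : IsMerge μ A B) : IsMerge μ B A :=
  ⟨hμ.map_of_not_isFresh, hμ.image_eq.symm, fun c hc => (hμ.changed c hc).imp_right Or.symm,
    hμ.map_map⟩

lemma mem_union_of_ne (hμ : IsMerge μ A B) {c : Const} (hc : μ c ≠ c) : c ∈ A ∪ B := by
  rcases (hμ.changed c hc).2 with h | h
  exacts [Or.inl h.1, Or.inr h.1]

lemma map_mem_union_of_ne (hμ : IsMerge μ A B) {c : Const} (hc : μ c ≠ c) : μ c ∈ A ∪ B := by
  rcases (hμ.changed c hc).2 with h | h
  exacts [Or.inr h.2, Or.inl h.2]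

lemma mem_union_of_mem_image (hμ : IsMerge μ A B) {z : Const} (hz : z ∈ μ '' A) : z ∈ A ∪ B := by
  obtain ⟨w, hw, rfl⟩ := hz
  by_cases hfix : μ w = w
  · rw [hfix]
    exact Or.inl hw
  · exact hμ.map_mem_union_of_ne hfix

lemma isAnchored_image_of_nonFresh (hμ : IsMerge μ A B) (hA : ∀ c ∈ A, nonFresh c) {k : Const}
    (hkA : k ∈ A) (hkB : k ∈ B) (hB : IsAnchored block B) {s : Set Const}
    (hs : IsAnchored block s) : IsAnchored (fun z => μ '' block z) (μ '' s) := by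
  by_cases hsB : s = B
  · left
    rintro _ ⟨c, hc, rfl⟩
    obtain ⟨w, hw, hwc⟩ : μ c ∈ μ '' A := hμ.image_eq ▸ ⟨c, hsB ▸ hc, rfl⟩
    rw [← hwc, hμ.map_of_not_isFresh w (not_isFresh_iff.mpr (hA w hw))]
    exact hA w hw
  refine hs.image hμ.map_of_not_isFresh fun z _ ⟨hzf, hzs⟩ => ?_
  have hfix : μ z = z := by
    by_contra hne
    rcases (hμ.changed z hne).2 with ⟨hzA, -⟩ | ⟨hzB, -⟩
    · exact not_isFresh_iff.mpr (hA z hzA) hzf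
    · have hkn : ¬ IsBlockMember block B k := fun hm => not_isFresh_iff.mpr (hA k hkA) hm.1
      have hzk : z ≠ k := by
        rintro rfl
        exact not_isFresh_iff.mpr (hA z hkA) hzf
      exact hsB (hzs.symm.trans (hB.isBlockMember hkB hkn hzB hzf hzk).2)
  rw [hfix]
  exact ⟨hzf, congrArg (μ '' ·) hzs⟩

-- `μ α` takes over the block of `α`; every other constant keeps the image of its own block.
lemma isAnchored_image_of_forall_ne (hμ : IsMerge μ A B) {α : Const}
    (hα : ∀ z ∈ A ∪ B, z ≠ α → IsBlockMember block A z ∨ IsBlockMember block B z)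
    {s : Set Const} (hs : IsAnchored block s) :
    IsAnchored (fun z => μ '' block (if z = μ α then α else z)) (μ '' s) := by
  have hblock : ∀ z ∈ A ∪ B, z ≠ α → isFresh z ∧ μ '' block z = μ '' A := by
    intro z hz hne
    rcases hα z hz hne with ⟨hzf, hzA⟩ | ⟨hzf, hzB⟩
    · exact ⟨hzf, by rw [hzA]⟩
    · exact ⟨hzf, by rw [hzB, hμ.image_eq]⟩
  by_cases hsAB : s = A ∨ s = B
  · have hsA : μ '' s = μ '' A := by
      rcases hsAB with rfl | rfl
      exacts [rfl, hμ.image_eq.symm]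
    rw [hsA]
    refine IsAnchored.of_subset (Set.subsingleton_singleton (a := μ α)) fun z hz hnm => ?_
    rw [Set.mem_singleton_iff]
    by_contra hne
    have hzα : z ≠ α := by
      rintro rfl
      obtain ⟨w, -, rfl⟩ := hz
      exact hne (hμ.map_map w).symm
    obtain ⟨hzf, hzblock⟩ := hblock z (hμ.mem_union_of_mem_image hz) hzα
    exact hnm ⟨hzf, by simpa only [if_neg hne] using hzblock⟩
  push Not at hsAB
  have hmem_eq : ∀ z ∈ A ∪ B, block z = s → z = α := by
    intro z hz hzs
    by_contra hne
    rcases hα z hz hne with ⟨-, hzA⟩ | ⟨-, hzB⟩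
    exacts [hsAB.1 (hzs.symm.trans hzA), hsAB.2 (hzs.symm.trans hzB)]
  refine hs.image hμ.map_of_not_isFresh fun z _ ⟨hzf, hzs⟩ => ?_
  by_cases hzα : z = α
  · subst hzα
    refine ⟨?_, by simp only [if_true, hzs]⟩
    by_cases hfix : μ z = z
    · rwa [hfix]
    · exact (hblock (μ z) (hμ.map_mem_union_of_ne hfix) hfix).1
  · have hfix : μ z = z := by
      by_contra hne
      exact hzα (hmem_eq z (hμ.mem_union_of_ne hne) hzs)
    have hzμα : z ≠ μ α := by
      intro h
      have hμα : μ α ≠ α := fun h' => hzα (h.trans h')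
      exact hμα (hmem_eq _ (hμ.map_mem_union_of_ne hμα) (h ▸ hzs))
    rw [hfix]
    exact ⟨hzf, by simp only [if_neg hzμα, hzs]⟩

lemma exists_isAnchored_image (hμ : IsMerge μ A B) (hAB : (A ∩ B).Nonempty)
    (hA : IsAnchored block A) (hB : IsAnchored block B) :
    ∃ block' : Const → Set Const, ∀ s, IsAnchored block s → IsAnchored block' (μ '' s) := by
  obtain ⟨k, hkA, hkB⟩ := hAB
  rcases hA with hAnf | hAsub
  · exact ⟨_, fun s hs => hμ.isAnchored_image_of_nonFresh hAnf hkA hkB hB hs⟩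
  rcases hB with hBnf | hBsub
  · exact ⟨_, fun s hs => hμ.symm.isAnchored_image_of_nonFresh hBnf hkB hkA (Or.inr hAsub) hs⟩
  obtain ⟨α, hα⟩ := exists_forall_ne_isBlockMember hAsub hBsub hkA hkB
  exact ⟨_, fun s hs => hμ.isAnchored_image_of_forall_ne hα hs⟩

end IsMerge

lemma KDStep.exists_isMerge {G : EERSig} {Sg : Deps} {S S' : DB} (hCD : CDshaped G Sg)
    (hlen : ∀ t ∈ S, t.args.length = G.ar t.rel) (h : KDStep Sg S S') :
    ∃ a ∈ S, ∃ b ∈ S, ∃ μ : Const → Const, IsMerge μ (argSet a) (argSet b) ∧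
      (argSet a ∩ argSet b).Nonempty ∧ S' = mapAtom μ '' S := by
  obtain ⟨κ, hκ, a, ha, b, hb, -, harel, -, hkey, μ, hfix, hab, halign, rfl⟩ := h
  have hpos : ∀ {j : ℕ} {x y : Const},
      a.args[j]? = some x → b.args[j]? = some y → μ x = μ y := by
    intro j x y hx hy
    simpa [mapAtom, hx, hy] using congrArg (fun t : Atom => t.args[j]?) hab
  refine ⟨a, ha, b, hb, μ, ⟨hfix, ?_, fun c hc => ⟨by_contra fun h => hc (hfix c h), ?_⟩, ?_⟩,
    ?_, rfl⟩
  · rw [← argSet_mapAtom, ← argSet_mapAtom, hab]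
  · obtain ⟨j, ⟨h1, h2⟩ | ⟨h1, h2⟩⟩ := halign c hc
    · exact Or.inl ⟨List.mem_of_getElem? h1, List.mem_of_getElem? h2⟩
    · exact Or.inr ⟨List.mem_of_getElem? h1, List.mem_of_getElem? h2⟩
  · intro c
    by_cases hc : μ c = c
    · rw [hc, hc]
    obtain ⟨j, ⟨h1, h2⟩ | ⟨h1, h2⟩⟩ := halign c hc
    exacts [(hpos h1 h2).symm, hpos h2 h1]
  · obtain ⟨-, i, hi, hK⟩ := hCD.2.2.2.2 κ hκ
    simp only [hK, projT, List.map_cons, List.map_nil, List.cons.injEq, and_true] at hkey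
    have hk := List.getElem?_eq_getElem (l := a.args) (by rw [hlen a ha, harel]; exact hi)
    exact ⟨_, List.mem_of_getElem? hk, List.mem_of_getElem? (hkey ▸ hk)⟩

lemma ChaseInvariant.kdStep {G : EERSig} {Sg : Deps} {S S' : DB} (hCD : CDshaped G Sg)
    (hS : ChaseInvariant G.ar S) (hstep : KDStep Sg S S') : ChaseInvariant G.ar S' := by
  obtain ⟨hlen, block, hblock⟩ := hS
  obtain ⟨a, ha, b, hb, μ, hμ, hAB, rfl⟩ := hstep.exists_isMerge hCD hlen
  obtain ⟨block', hblock'⟩ := hμ.exists_isAnchored_image hAB (hblock a ha) (hblock b hb)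
  refine ⟨?_, block', ?_⟩
  · rintro _ ⟨t, ht, rfl⟩
    simpa [mapAtom] using hlen t ht
  · rintro _ ⟨t, ht, rfl⟩
    rw [argSet_mapAtom]
    exact hblock' _ (hblock t ht)

theorem relationship_facts_trichotomy_in_chase_general
    (G : EERSig) (Sg : Deps) (D Ch : DB)
    (hCD : CDshaped G Sg)
    (hDnf : ∀ a ∈ D, ∀ c ∈ a.args, nonFresh c)
    (hDar : ∀ a ∈ D, a.args.length = G.ar a.rel)
    (hchase : IsChase G.ar Sg D Ch) :
    ∀ a ∈ Ch, a.rel ∈ G.RR →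
      (∀ c ∈ a.args, nonFresh c) ∨
      (∀ c ∈ a.args, isFresh c) ∨
      (∃ c : Const, nonFresh c ∧ c ∈ a.args ∧ ∀ x ∈ a.args, isFresh x ∨ x = c) := by
  obtain ⟨seq, h0, hstep, rfl, -⟩ := hchase
  have hinv : ∀ n, ChaseInvariant G.ar (seq n) := by
    intro n
    induction n with
    | zero => exact h0 ▸ ⟨hDar, fun _ => ∅, fun t ht => Or.inl (hDnf t ht)⟩
    | succ n ih =>
      rcases hstep n with (hid | hkd) | heq
      · exact ih.idStep hCD hid
      · exact ih.kdStep hCD hkd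
      · exact heq ▸ ih
  rintro a ⟨N, hN⟩ -
  obtain ⟨-, block, hblock⟩ := hinv N
  exact (hblock a (hN N le_rfl)).trichotomy

/-- in the chase of a database `D` (with only non-fresh constants)
under conceptual dependencies, every fact over a relationship predicate
`r ∈ R_R` contains either only non-fresh constants, or only fresh constants, or
exactly one distinct non-fresh constant (possibly occurring in several
positions); no other combination occurs. -/
theorem relationship_facts_trichotomy_in_chase
    (G : EERSig) (Sg : Deps) (D Ch : DB)
    (hCD : CDshaped G Sg)
    (hDfin : D.Finite)
    (hDnf : ∀ a ∈ D, ∀ c ∈ a.args, nonFresh c)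
    (hDar : ∀ a ∈ D, a.args.length = G.ar a.rel)
    (hchase : IsChase G.ar Sg D Ch) :
    ∀ a ∈ Ch, a.rel ∈ G.RR →
      (∀ c ∈ a.args, nonFresh c) ∨
      (∀ c ∈ a.args, isFresh c) ∨
      (∃ c : Const, nonFresh c ∧ c ∈ a.args ∧ ∀ x ∈ a.args, isFresh x ∨ x = c) :=
  relationship_facts_trichotomy_in_chase_general G Sg D Ch hCD hDnf hDar hchase
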